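/- Fix reals 0 < a ≤ b and a Borel probability measure μ on ℝ with μ([a,b]) = 1. Then for all integers m ≥ 2 and n ≥ 1: ∫ (M_n − h)^{2m} dμⁿ ≤ (2m)! · h^{2m} · b^{2m} / (2^m · m! · a^{2m} · n^m). -/

import Mathlib

/-
Write `S = ∑ⱼ xⱼ⁻¹` and `c = ∫ x⁻¹ dμ = h⁻¹`. Then `M_n - h = -h (S - n c) / S` with `S ≥ n / b`,
so `(M_n - h)^{2m} ≤ (h b / n)^{2m} T^{2m}`, where `T = ∑ⱼ (xⱼ⁻¹ - c)` is a sum of `n` i.i.d.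
centred variables bounded by `K = a⁻¹`. For such a sum `E T^{2p+2} = ∑ᵢ E[φ(xᵢ) T^{2p+1}]`, and
integrating first in `xᵢ` with `u` the sum of the other terms, the one-dimensional estimate
`E[φ (φ + u)^{2p+1}] ≤ (2p+1) K² E[(φ + u)^{2p}]` gives `E T^{2p+2} ≤ (2p+1) n K² E T^{2p}`, hence
`E T^{2m} ≤ (2m)! / (2^m m!) (n K²)^m`. The one-dimensional estimate comes from factoring
`(t + u)^{2p+1} - u^{2p+1} = t · ∑ᵢ (t + u)^i u^{2p-i}`, bounding the geometric sum by
`(2p+1)/2 ((t + u)^{2p} + u^{2p})`, using `E φ = 0`, and Jensen's `u^{2p} ≤ E (φ + u)^{2p}`.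
-/

open MeasureTheory Finset

lemma pow_mul_pow_add_pow_mul_pow_le {A B : ℝ} (hA : 0 ≤ A) (hB : 0 ≤ B) {j q : ℕ}
    (hj : j ≤ q) : A ^ j * B ^ (q - j) + A ^ (q - j) * B ^ j ≤ A ^ q + B ^ q := by
  have hA' : A ^ q = A ^ j * A ^ (q - j) := by rw [← pow_add, Nat.add_sub_cancel' hj]
  have hB' : B ^ q = B ^ j * B ^ (q - j) := by rw [← pow_add, Nat.add_sub_cancel' hj]
  have hprod : 0 ≤ (A ^ j - B ^ j) * (A ^ (q - j) - B ^ (q - j)) := by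
    rcases le_total A B with hAB | hBA
    · exact mul_nonneg_of_nonpos_of_nonpos (by linarith [pow_le_pow_left₀ hA hAB j])
        (by linarith [pow_le_pow_left₀ hA hAB (q - j)])
    · exact mul_nonneg (by linarith [pow_le_pow_left₀ hB hBA j])
        (by linarith [pow_le_pow_left₀ hB hBA (q - j)])
  rw [hA', hB']
  linarith

lemma two_mul_sum_pow_mul_pow_le {A B : ℝ} (hA : 0 ≤ A) (hB : 0 ≤ B) (q : ℕ) :
    2 * ∑ j ∈ range (q + 1), A ^ j * B ^ (q - j) ≤ (q + 1) * (A ^ q + B ^ q) := by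
  have hreflect : ∑ j ∈ range (q + 1), A ^ j * B ^ (q - j)
      = ∑ j ∈ range (q + 1), A ^ (q - j) * B ^ j := by
    rw [← sum_range_reflect]
    refine sum_congr rfl fun j hj => ?_
    rw [Nat.add_sub_cancel, Nat.sub_sub_self (Nat.lt_succ_iff.mp (mem_range.mp hj))]
  calc 2 * ∑ j ∈ range (q + 1), A ^ j * B ^ (q - j)
      = ∑ j ∈ range (q + 1), (A ^ j * B ^ (q - j) + A ^ (q - j) * B ^ j) := by
        rw [sum_add_distrib, ← hreflect, two_mul]
    _ ≤ ∑ _j ∈ range (q + 1), (A ^ q + B ^ q) :=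
        sum_le_sum fun j hj =>
          pow_mul_pow_add_pow_mul_pow_le hA hB (Nat.lt_succ_iff.mp (mem_range.mp hj))
    _ = (q + 1) * (A ^ q + B ^ q) := by simp [mul_add]

lemma two_mul_mul_add_pow_sub_pow_le {t u K : ℝ} (ht : |t| ≤ K) (p : ℕ) :
    2 * (t * ((t + u) ^ (2 * p + 1) - u ^ (2 * p + 1)))
      ≤ (2 * p + 1) * K ^ 2 * ((t + u) ^ (2 * p) + u ^ (2 * p)) := by
  set S := ∑ i ∈ range (2 * p + 1), (t + u) ^ i * u ^ (2 * p - i)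
  have hgeom : (t + u) ^ (2 * p + 1) - u ^ (2 * p + 1) = S * t := by
    rw [← geom_sum₂_mul, add_sub_cancel_right, Nat.add_sub_cancel]
  have hS : 2 * |S| ≤ (2 * p + 1) * ((t + u) ^ (2 * p) + u ^ (2 * p)) := by
    have hpair := two_mul_sum_pow_mul_pow_le (abs_nonneg (t + u)) (abs_nonneg u) (2 * p)
    rw [(even_two_mul p).pow_abs, (even_two_mul p).pow_abs] at hpair
    calc 2 * |S| ≤ 2 * ∑ i ∈ range (2 * p + 1), |t + u| ^ i * |u| ^ (2 * p - i) := by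
          gcongr
          refine (abs_sum_le_sum_abs _ _).trans_eq (sum_congr rfl fun i _ => ?_)
          rw [abs_mul, abs_pow, abs_pow]
      _ ≤ _ := by exact_mod_cast hpair
  have ht2 : t ^ 2 ≤ K ^ 2 := by
    rw [← sq_abs]; exact pow_le_pow_left₀ (abs_nonneg t) ht 2
  calc 2 * (t * ((t + u) ^ (2 * p + 1) - u ^ (2 * p + 1))) = t ^ 2 * (2 * S) := by
        rw [hgeom]; ring
    _ ≤ t ^ 2 * (2 * |S|) := by gcongr; exact le_abs_self S
    _ ≤ K ^ 2 * ((2 * p + 1) * ((t + u) ^ (2 * p) + u ^ (2 * p))) := by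
        gcongr
    _ = _ := by ring

lemma abs_sum_le_card_mul {ι : Type*} [Fintype ι] {f : ι → ℝ} {K : ℝ} (hf : ∀ i, |f i| ≤ K) :
    |∑ i, f i| ≤ Fintype.card ι * K :=
  (abs_sum_le_sum_abs _ _).trans ((sum_le_card_nsmul _ _ _ fun i _ => hf i).trans_eq (by simp))

theorem integral_pi_eq_integral_integral_succAbove {α E : Type*} [MeasurableSpace α]
    [NormedAddCommGroup E] [NormedSpace ℝ E] (ν : Measure α) [SigmaFinite ν] {k : ℕ}
    (i : Fin (k + 1)) {G : α × (Fin k → α) → E}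
    (hG : Integrable G (ν.prod (Measure.pi fun _ => ν))) :
    ∫ x, G (x i, fun j => x (i.succAbove j)) ∂Measure.pi (fun _ => ν)
      = ∫ z, ∫ y, G (y, z) ∂ν ∂Measure.pi (fun _ => ν) := by
  rw [← integral_prod_symm G hG,
    ← (measurePreserving_piFinSuccAbove (fun _ => ν) i).integral_comp' G]
  rfl

lemma factorial_two_mul_succ_div (p : ℕ) :
    ((2 * (p + 1)).factorial : ℝ) / (2 ^ (p + 1) * (p + 1).factorial)
      = (2 * p + 1) * ((2 * p).factorial / (2 ^ p * p.factorial)) := by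
  rw [show 2 * (p + 1) = 2 * p + 1 + 1 by ring]
  push_cast [Nat.factorial_succ]
  field_simp
  ring

section Moments

variable {α : Type*} [MeasurableSpace α] {ν : Measure α} [IsProbabilityMeasure ν] {φ : α → ℝ}
  {K : ℝ}

lemma pow_le_integral_add_pow {f : α → ℝ} (hf : Integrable f ν) (hf0 : ∫ s, f s ∂ν = 0)
    {n : ℕ} (hn : Even n) (u : ℝ) (hfu : Integrable (fun s => (f s + u) ^ n) ν) :
    u ^ n ≤ ∫ s, (f s + u) ^ n ∂ν := by
  have hJensen := hn.convexOn_pow.map_integral_le (f := fun s => f s + u)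
    (continuous_pow n).continuousOn isClosed_univ (ae_of_all _ fun _ => Set.mem_univ _)
    (hf.add (integrable_const u)) hfu
  rwa [integral_add hf (integrable_const u), hf0, integral_const, probReal_univ, one_smul,
    zero_add] at hJensen

lemma integral_mul_add_pow_le (hφm : Measurable φ) (hφK : ∀ s, |φ s| ≤ K)
    (hφ0 : ∫ s, φ s ∂ν = 0) (p : ℕ) (u : ℝ) :
    ∫ s, φ s * (φ s + u) ^ (2 * p + 1) ∂ν
      ≤ (2 * p + 1) * K ^ 2 * ∫ s, (φ s + u) ^ (2 * p) ∂ν := by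
  have hK : 0 ≤ K := (abs_nonneg _).trans (hφK (nonempty_of_isProbabilityMeasure ν).some)
  have hφu : ∀ s, |φ s + u| ≤ K + |u| := fun s =>
    (abs_add_le _ _).trans (by gcongr; exact hφK s)
  have hφi : Integrable φ ν :=
    .of_bound hφm.aestronglyMeasurable K (ae_of_all _ hφK)
  have hφui : ∀ q, Integrable (fun s => (φ s + u) ^ q) ν := fun q =>
    .of_bound (by fun_prop) ((K + |u|) ^ q) (ae_of_all _ fun s => by
      rw [Real.norm_eq_abs, abs_pow]; gcongr; exact hφu s)
  have hφφui : Integrable (fun s => φ s * (φ s + u) ^ (2 * p + 1)) ν :=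
    .of_bound (by fun_prop) (K * (K + |u|) ^ (2 * p + 1)) (ae_of_all _ fun s => by
      rw [Real.norm_eq_abs, abs_mul, abs_pow]; gcongr; exacts [hφK s, hφu s])
  have hJ := pow_le_integral_add_pow hφi hφ0 (even_two_mul p) u (hφui _)
  have hpointwise : ∫ s, 2 * (φ s * (φ s + u) ^ (2 * p + 1) - φ s * u ^ (2 * p + 1)) ∂ν
      ≤ ∫ s, (2 * p + 1) * K ^ 2 * ((φ s + u) ^ (2 * p) + u ^ (2 * p)) ∂ν :=
    integral_mono ((hφφui.sub (hφi.mul_const _)).const_mul 2)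
      (((hφui _).add (integrable_const _)).const_mul _) fun s => by
        simpa only [mul_sub] using two_mul_mul_add_pow_sub_pow_le (hφK s) p (u := u)
  rw [integral_const_mul, integral_sub hφφui (hφi.mul_const _), integral_mul_const, hφ0,
    zero_mul, sub_zero, integral_const_mul, integral_add (hφui _) (integrable_const _),
    integral_const, probReal_univ, one_smul] at hpointwise
  have hJ' := mul_le_mul_of_nonneg_left hJ (by positivity : (0 : ℝ) ≤ (2 * p + 1) * K ^ 2)
  linarith

lemma integrable_sum_comp_pow (hφm : Measurable φ) (hφK : ∀ s, |φ s| ≤ K) (k q : ℕ) :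
    Integrable (fun x => (∑ j, φ (x j)) ^ q) (Measure.pi fun _ : Fin k => ν) :=
  .of_bound (by fun_prop : Measurable _).aestronglyMeasurable ((k * K) ^ q) (ae_of_all _ fun x => by
    rw [Real.norm_eq_abs, abs_pow]
    gcongr
    exact (abs_sum_le_card_mul fun j => hφK (x j)).trans_eq (by simp))

lemma integral_mul_sum_pow_le (hφm : Measurable φ) (hφK : ∀ s, |φ s| ≤ K)
    (hφ0 : ∫ s, φ s ∂ν = 0) {k : ℕ} (i : Fin k) (p : ℕ) :
    ∫ x, φ (x i) * (∑ j, φ (x j)) ^ (2 * p + 1) ∂Measure.pi (fun _ : Fin k => ν)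
      ≤ (2 * p + 1) * K ^ 2
        * ∫ x, (∑ j, φ (x j)) ^ (2 * p) ∂Measure.pi (fun _ : Fin k => ν) := by
  cases k with
  | zero => exact i.elim0
  | succ k =>
  have hK : 0 ≤ K := (abs_nonneg _).trans (hφK (nonempty_of_isProbabilityMeasure ν).some)
  set U : (Fin k → α) → ℝ := fun z => ∑ j, φ (z j)
  have hsplit : ∀ x : Fin (k + 1) → α,
      ∑ j, φ (x j) = φ (x i) + U (fun j => x (i.succAbove j)) :=
    fun x => Fin.sum_univ_succAbove _ i
  have hbound : ∀ yz : α × (Fin k → α), |φ yz.1 + U yz.2| ≤ K + k * K :=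
    fun yz => (abs_add_le _ _).trans (add_le_add (hφK _)
      ((abs_sum_le_card_mul fun j => hφK (yz.2 j)).trans_eq (by simp)))
  have hUm : Measurable U := by fun_prop
  have hG₁ : Integrable
      (fun yz : α × (Fin k → α) => φ yz.1 * (φ yz.1 + U yz.2) ^ (2 * p + 1))
      (ν.prod (Measure.pi fun _ => ν)) :=
    .of_bound (by fun_prop) (K * (K + k * K) ^ (2 * p + 1)) (ae_of_all _ fun yz => by
      rw [Real.norm_eq_abs, abs_mul, abs_pow]; gcongr; exacts [hφK _, hbound yz])
  have hG₂ : Integrable (fun yz : α × (Fin k → α) => (φ yz.1 + U yz.2) ^ (2 * p))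
      (ν.prod (Measure.pi fun _ => ν)) :=
    .of_bound (by fun_prop) ((K + k * K) ^ (2 * p)) (ae_of_all _ fun yz => by
      rw [Real.norm_eq_abs, abs_pow]; gcongr; exact hbound yz)
  simp only [hsplit]
  rw [integral_pi_eq_integral_integral_succAbove ν i hG₁,
    integral_pi_eq_integral_integral_succAbove ν i hG₂, ← integral_const_mul]
  exact integral_mono hG₁.integral_prod_right (hG₂.integral_prod_right.const_mul _)
    fun z => integral_mul_add_pow_le hφm hφK hφ0 p (U z)

lemma integral_sum_pow_two_mul_succ_le (hφm : Measurable φ) (hφK : ∀ s, |φ s| ≤ K)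
    (hφ0 : ∫ s, φ s ∂ν = 0) (k p : ℕ) :
    ∫ x, (∑ j, φ (x j)) ^ (2 * (p + 1)) ∂Measure.pi (fun _ : Fin k => ν)
      ≤ k * ((2 * p + 1) * K ^ 2)
        * ∫ x, (∑ j, φ (x j)) ^ (2 * p) ∂Measure.pi (fun _ : Fin k => ν) := by
  have hK : 0 ≤ K := (abs_nonneg _).trans (hφK (nonempty_of_isProbabilityMeasure ν).some)
  have hexpand : ∀ x : Fin k → α,
      (∑ j, φ (x j)) ^ (2 * (p + 1)) = ∑ i, φ (x i) * (∑ j, φ (x j)) ^ (2 * p + 1) := by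
    intro x
    rw [← sum_mul]
    ring
  have hint : ∀ i : Fin k,
      Integrable (fun x => φ (x i) * (∑ j, φ (x j)) ^ (2 * p + 1))
        (Measure.pi fun _ : Fin k => ν) := fun i =>
    .of_bound (by fun_prop) (K * (k * K) ^ (2 * p + 1)) (ae_of_all _ fun x => by
      rw [Real.norm_eq_abs, abs_mul, abs_pow]
      gcongr
      exacts [hφK _, (abs_sum_le_card_mul fun j => hφK (x j)).trans_eq (by simp)])
  simp only [hexpand]
  rw [integral_finsetSum _ fun i _ => hint i]
  calc ∑ i, ∫ x, φ (x i) * (∑ j, φ (x j)) ^ (2 * p + 1) ∂Measure.pi (fun _ : Fin k => ν)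
      ≤ ∑ _i : Fin k, (2 * p + 1) * K ^ 2
          * ∫ x, (∑ j, φ (x j)) ^ (2 * p) ∂Measure.pi (fun _ : Fin k => ν) :=
        sum_le_sum fun i _ => integral_mul_sum_pow_le hφm hφK hφ0 i p
    _ = _ := by simp [mul_assoc]

theorem integral_sum_pow_two_mul_le (hφm : Measurable φ) (hφK : ∀ s, |φ s| ≤ K)
    (hφ0 : ∫ s, φ s ∂ν = 0) (k p : ℕ) :
    ∫ x, (∑ j, φ (x j)) ^ (2 * p) ∂Measure.pi (fun _ : Fin k => ν)
      ≤ (2 * p).factorial / (2 ^ p * p.factorial) * (k * K ^ 2) ^ p := by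
  induction p with
  | zero => simp
  | succ p ih =>
    calc ∫ x, (∑ j, φ (x j)) ^ (2 * (p + 1)) ∂Measure.pi (fun _ : Fin k => ν)
        ≤ k * ((2 * p + 1) * K ^ 2)
          * ∫ x, (∑ j, φ (x j)) ^ (2 * p) ∂Measure.pi (fun _ : Fin k => ν) :=
          integral_sum_pow_two_mul_succ_le hφm hφK hφ0 k p
      _ ≤ k * ((2 * p + 1) * K ^ 2)
          * ((2 * p).factorial / (2 ^ p * p.factorial) * (k * K ^ 2) ^ p) := by
          gcongr
      _ = _ := by rw [factorial_two_mul_succ_div]; ring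

end Moments

lemma abs_div_sub_inv_le {n S c b : ℝ} (hn : 0 < n) (hc : 0 < c) (hb : 0 < b)
    (hS : n / b ≤ S) : |n / S - c⁻¹| ≤ c⁻¹ * b / n * |S - n * c| := by
  have hS0 : 0 < S := (div_pos hn hb).trans_le hS
  calc |n / S - c⁻¹| = c⁻¹ / S * |S - n * c| := by
        rw [show n / S - c⁻¹ = -(c⁻¹ / S * (S - n * c)) by field_simp; ring, abs_neg, abs_mul,
          abs_of_pos (by positivity)]
    _ ≤ c⁻¹ / (n / b) * |S - n * c| := by gcongr
    _ = c⁻¹ * b / n * |S - n * c| := by rw [div_div_eq_mul_div]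

lemma div_sum_inv_sub_inv_pow_le {ι : Type*} [Fintype ι] [Nonempty ι] {x : ι → ℝ} {b c : ℝ}
    (hx : ∀ j, 0 < x j ∧ x j ≤ b) (hc : 0 < c) {n : ℕ} (hn : Even n) :
    (Fintype.card ι / ∑ j, (x j)⁻¹ - c⁻¹) ^ n
      ≤ (c⁻¹ * b / Fintype.card ι) ^ n * (∑ j, ((x j)⁻¹ - c)) ^ n := by
  have hb : 0 < b := (hx (Classical.arbitrary ι)).1.trans_le (hx _).2
  have hS : Fintype.card ι / b ≤ ∑ j, (x j)⁻¹ :=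
    (sum_le_sum fun j _ => inv_anti₀ (hx j).1 (hx j).2).trans_eq' (by simp [div_eq_mul_inv])
  have hmean := abs_div_sub_inv_le (by positivity) hc hb hS
  calc (Fintype.card ι / ∑ j, (x j)⁻¹ - c⁻¹) ^ n
      = |Fintype.card ι / ∑ j, (x j)⁻¹ - c⁻¹| ^ n := (hn.pow_abs _).symm
    _ ≤ (c⁻¹ * b / Fintype.card ι * |∑ j, (x j)⁻¹ - Fintype.card ι * c|) ^ n :=
        pow_le_pow_left₀ (abs_nonneg _) hmean n
    _ = _ := by simp only [mul_pow, hn.pow_abs, sum_sub_distrib, sum_const, card_univ, nsmul_eq_mul]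

section SupportedOnIcc

variable {μ : Measure ℝ} [IsProbabilityMeasure μ] {a b : ℝ}

lemma integrable_inv_of_ae_mem_Icc (ha : 0 < a) (hae : ∀ᵐ x ∂μ, x ∈ Set.Icc a b) :
    Integrable (fun x => x⁻¹) μ :=
  .of_bound measurable_inv.aestronglyMeasurable a⁻¹ (hae.mono fun _ hx => by
    rw [Real.norm_eq_abs, abs_of_pos (inv_pos.2 (ha.trans_le hx.1))]
    exact inv_anti₀ ha hx.1)

lemma integral_inv_mem_Icc (ha : 0 < a) (hae : ∀ᵐ x ∂μ, x ∈ Set.Icc a b) :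
    ∫ x, x⁻¹ ∂μ ∈ Set.Icc b⁻¹ a⁻¹ :=
  (convex_Icc _ _).integral_mem isClosed_Icc
    (hae.mono fun _ hx => ⟨inv_anti₀ (ha.trans_le hx.1) hx.2, inv_anti₀ ha hx.1⟩)
    (integrable_inv_of_ae_mem_Icc ha hae)

lemma integral_inv_max_sub_integral_inv (ha : 0 < a) (hae : ∀ᵐ x ∂μ, x ∈ Set.Icc a b) :
    ∫ s, ((max a s)⁻¹ - ∫ x, x⁻¹ ∂μ) ∂μ = 0 := by
  have hmax : (fun s => (max a s)⁻¹ - ∫ x, x⁻¹ ∂μ) =ᵐ[μ]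
      fun s => s⁻¹ - ∫ x, x⁻¹ ∂μ :=
    hae.mono fun s hs => by simp only [max_eq_right hs.1]
  rw [integral_congr_ae hmax,
    integral_sub (integrable_inv_of_ae_mem_Icc ha hae) (integrable_const _), integral_const,
    probReal_univ, one_smul, sub_self]

lemma ae_div_sum_inv_sub_inv_pow_le (ha : 0 < a) (hae : ∀ᵐ x ∂μ, x ∈ Set.Icc a b)
    (hc : 0 < ∫ x, x⁻¹ ∂μ) {n : ℕ} (hn : 1 ≤ n) (m : ℕ) :
    ∀ᵐ x ∂(Measure.pi fun _ : Fin n => μ),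
      ((n : ℝ) / (∑ j, (x j)⁻¹) - (∫ x, x⁻¹ ∂μ)⁻¹) ^ (2 * m)
        ≤ ((∫ x, x⁻¹ ∂μ)⁻¹ * b / n) ^ (2 * m)
          * (∑ j, ((max a (x j))⁻¹ - ∫ x, x⁻¹ ∂μ)) ^ (2 * m) := by
  have : Nonempty (Fin n) := ⟨⟨0, hn⟩⟩
  filter_upwards [ae_all_iff.2 fun j : Fin n => Measure.tendsto_eval_ae_ae.eventually hae]
    with x hx
  have hmax : ∀ j, max a (x j) = x j := fun j => max_eq_right (hx j).1
  simpa only [hmax, Fintype.card_fin] using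
    div_sum_inv_sub_inv_pow_le (fun j => ⟨ha.trans_le (hx j).1, (hx j).2⟩) hc (even_two_mul m)

end SupportedOnIcc

lemma abs_inv_max_sub_le {a c : ℝ} (ha : 0 < a) (hc : c ∈ Set.Ioc 0 a⁻¹) (s : ℝ) :
    |(max a s)⁻¹ - c| ≤ a⁻¹ := by
  have h₁ : 0 < (max a s)⁻¹ := inv_pos.2 (ha.trans_le (le_max_left a s))
  have h₂ : (max a s)⁻¹ ≤ a⁻¹ := inv_anti₀ ha (le_max_left a s)
  rw [abs_sub_le_iff]
  constructor <;> linarith [hc.1, hc.2]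

theorem stmt_12_general (a b : ℝ) (ha : 0 < a) (hab : a ≤ b)
    (μ : Measure ℝ) [IsProbabilityMeasure μ] (hsupp : μ (Set.Icc a b) = 1)
    (h : ℝ) (hh : h = (∫ x, x⁻¹ ∂μ)⁻¹)
    (m n : ℕ) (hn : 1 ≤ n) :
    (∫ x, ((n : ℝ) / (∑ j, (x j)⁻¹) - h) ^ (2 * m) ∂(Measure.pi fun _ : Fin n => μ))
      ≤ ((2 * m).factorial : ℝ) * h ^ (2 * m) * b ^ (2 * m)
          / (2 ^ m * (m.factorial : ℝ) * a ^ (2 * m) * (n : ℝ) ^ m) := by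
  have hae : ∀ᵐ x ∂μ, x ∈ Set.Icc a b :=
    (ae_mem_iff_measure_eq measurableSet_Icc.nullMeasurableSet).2 (by simp [hsupp])
  set c := ∫ x, x⁻¹ ∂μ
  have hc := integral_inv_mem_Icc ha hae
  have hc0 : 0 < c := (inv_pos.2 (ha.trans_le hab)).trans_le hc.1
  -- clipping at `a` makes `φ` bounded everywhere; it is `s⁻¹ - c` on the support of `μ`
  set φ : ℝ → ℝ := fun s => (max a s)⁻¹ - c
  have hφm : Measurable φ := by fun_prop
  have hφK : ∀ s, |φ s| ≤ a⁻¹ := abs_inv_max_sub_le ha ⟨hc0, hc.2⟩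
  have hmoment := integral_sum_pow_two_mul_le hφm hφK
    (integral_inv_max_sub_integral_inv ha hae) (ν := μ) n m
  have hpointwise := ae_div_sum_inv_sub_inv_pow_le (b := b) ha hae hc0 hn m
  rw [← hh] at hpointwise
  calc ∫ x, ((n : ℝ) / (∑ j, (x j)⁻¹) - h) ^ (2 * m) ∂(Measure.pi fun _ : Fin n => μ)
      ≤ ∫ x, (h * b / n) ^ (2 * m) * (∑ j, φ (x j)) ^ (2 * m)
          ∂(Measure.pi fun _ : Fin n => μ) :=
        integral_mono_of_nonneg (ae_of_all _ fun _ => (even_two_mul m).pow_nonneg _)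
          ((integrable_sum_comp_pow hφm hφK n _).const_mul _) hpointwise
    _ ≤ (h * b / n) ^ (2 * m)
          * ((2 * m).factorial / (2 ^ m * m.factorial) * (n * a⁻¹ ^ 2) ^ m) := by
        rw [integral_const_mul]
        exact mul_le_mul_of_nonneg_left hmoment ((even_two_mul m).pow_nonneg _)
    _ = _ := by
        have hn0 : (n : ℝ) ≠ 0 := by positivity
        simp only [pow_mul, div_pow, mul_pow, inv_pow]
        field_simp
        ring

/-- Harmonic mean estimate (Theorem 5.1 of the paper, higher moments):
`𝔼((M_n - h)^{2m}) ≤ (2m)! h^{2m} b^{2m} / (2^m m! a^{2m} n^m)` for `m ≥ 2`. -/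
theorem stmt_12 (a b : ℝ) (ha : 0 < a) (hab : a ≤ b)
    (μ : Measure ℝ) [IsProbabilityMeasure μ] (hsupp : μ (Set.Icc a b) = 1)
    (h σ2 : ℝ) (hh : h = (∫ x, x⁻¹ ∂μ)⁻¹)
    (hσ2 : σ2 = ∫ x, (x⁻¹ - h⁻¹) ^ 2 ∂μ)
    (m n : ℕ) (hm : 2 ≤ m) (hn : 1 ≤ n) :
    (∫ x, ((n : ℝ) / (∑ j, (x j)⁻¹) - h) ^ (2 * m) ∂(Measure.pi fun _ : Fin n => μ))
      ≤ ((2 * m).factorial : ℝ) * h ^ (2 * m) * b ^ (2 * m)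
          / (2 ^ m * (m.factorial : ℝ) * a ^ (2 * m) * (n : ℝ) ^ m) :=
  stmt_12_general a b ha hab μ hsupp h hh m n hn
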